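/- arXiv:1604.04488 — 4 statements merged into one kernel-verified Lean document; each statement's English description precedes it below -/
import Mathlib

section
/- Let G be a locally compact Hausdorff group and B the ideal of bounded subsets of G. The family U⁺ = {A ⊆ G | the topological boundary ∂A is compact}, with symmetric difference as addition and intersection as multiplication, is a Boolean algebra in which B is an ideal; moreover U^G = {A ∈ U⁺ | for every nonempty compact K ⊆ G, (A·K) Δ A is bounded} is a subalgebra of U⁺ containing B and is invariant under left translation by elements of G. -/
open Set Pointwise

/-- A subset of `G` is bounded if it is contained in a compact set. -/
def Bdd {G : Type*} [TopologicalSpace G] (A : Set G) : Prop :=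
  ∃ K : Set G, IsCompact K ∧ A ⊆ K

/-- `U⁺`: the subsets of `G` with compact topological boundary. -/
def Uplus (G : Type*) [TopologicalSpace G] : Set (Set G) :=
  {A | IsCompact (frontier A)}

/-- `U^G`: the compactly almost invariant sets: sets in `U⁺` such that `(A·K) Δ A` is
bounded for every nonempty compact `K`. -/
def UG (G : Type*) [Group G] [TopologicalSpace G] : Set (Set G) :=
  {A | A ∈ Uplus G ∧ ∀ K : Set G, K.Nonempty → IsCompact K → Bdd (symmDiff (A * K) A)}

section Aux

variable {G : Type*} [Group G] [TopologicalSpace G] [IsTopologicalGroup G] [T2Space G]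

lemma bdd_mono {A B : Set G} (h : Bdd B) (hs : A ⊆ B) : Bdd A := by
  obtain ⟨K, hK, hBK⟩ := h
  exact ⟨K, hK, hs.trans hBK⟩

lemma bdd_union {A B : Set G} (hA : Bdd A) (hB : Bdd B) : Bdd (A ∪ B) := by
  obtain ⟨K, hK, hAK⟩ := hA
  obtain ⟨L, hL, hBL⟩ := hB
  exact ⟨K ∪ L, hK.union hL, union_subset_union hAK hBL⟩

lemma bdd_mul {A K : Set G} (hA : Bdd A) (hK : IsCompact K) : Bdd (A * K) := by
  obtain ⟨C, hC, hAC⟩ := hA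
  exact ⟨C * K, hC.mul hK, mul_subset_mul_right hAC⟩

lemma bdd_uplus {A : Set G} (h : Bdd A) : A ∈ Uplus G := by
  obtain ⟨K, hK, hAK⟩ := h
  refine hK.of_isClosed_subset isClosed_frontier ?_
  exact frontier_subset_closure.trans ((closure_mono hAK).trans_eq hK.isClosed.closure_eq)

lemma frontier_inter_subset' (A B : Set G) : frontier (A ∩ B) ⊆ frontier A ∪ frontier B :=
  (frontier_inter_subset A B).trans
    (union_subset_union inter_subset_left inter_subset_right)

lemma frontier_union_subset' (A B : Set G) : frontier (A ∪ B) ⊆ frontier A ∪ frontier B :=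
  (frontier_union_subset A B).trans
    (union_subset_union inter_subset_left inter_subset_right)

lemma frontier_symmDiff_subset (A B : Set G) :
    frontier (symmDiff A B) ⊆ frontier A ∪ frontier B := by
  rw [Set.symmDiff_def]
  refine (frontier_union_subset' _ _).trans (union_subset ?_ ?_)
  · rw [Set.diff_eq]
    refine (frontier_inter_subset' _ _).trans ?_
    rw [frontier_compl]
  · rw [Set.diff_eq]
    refine (frontier_inter_subset' _ _).trans ?_
    rw [frontier_compl]
    rw [union_comm]

lemma mem_mul_singleton {A : Set G} {k x : G} : x ∈ A * ({k} : Set G) ↔ x * k⁻¹ ∈ A := by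
  rw [Set.mul_singleton, Set.mem_image]
  constructor
  · rintro ⟨y, hy, rfl⟩; simpa using hy
  · intro h; exact ⟨x * k⁻¹, h, by group⟩

/-- Key estimate: the symmetric difference with a single translate is controlled by the
two-sided translate differences. -/
lemma key1 {A K : Set G} {k : G} (hk : k ∈ K) :
    symmDiff (A * {k}) A ⊆ symmDiff (A * K) A ∪ (symmDiff (A * K⁻¹) A) * K := by
  intro x hx
  rw [Set.mem_symmDiff] at hx
  rcases hx with ⟨h1, h2⟩ | ⟨h1, h2⟩
  · left
    rw [Set.mem_symmDiff]
    exact Or.inl ⟨mul_subset_mul_left (singleton_subset_iff.mpr hk) h1, h2⟩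
  · right
    refine ⟨x * k⁻¹, ?_, k, hk, by group⟩
    rw [Set.mem_symmDiff]
    left
    refine ⟨⟨x, h1, k⁻¹, inv_mem_inv.mpr hk, rfl⟩, fun hc => h2 ?_⟩
    exact mem_mul_singleton.mpr hc

lemma key2 {S K C : Set G} (hK : K.Nonempty)
    (h : ∀ k ∈ K, symmDiff (S * {k}) S ⊆ C) : symmDiff (S * K) S ⊆ C := by
  intro x hx
  rw [Set.mem_symmDiff] at hx
  rcases hx with ⟨h1, h2⟩ | ⟨h1, h2⟩
  · obtain ⟨s, hs, k, hk, rfl⟩ := h1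
    refine h k hk ?_
    rw [Set.mem_symmDiff]
    exact Or.inl ⟨⟨s, hs, k, rfl, rfl⟩, h2⟩
  · obtain ⟨k, hk⟩ := hK
    refine h k hk ?_
    rw [Set.mem_symmDiff]
    refine Or.inr ⟨h1, fun hc => h2 ?_⟩
    exact mul_subset_mul_left (singleton_subset_iff.mpr hk) hc

lemma key3 (A B : Set G) (k : G) :
    symmDiff ((symmDiff A B) * {k}) (symmDiff A B) ⊆
      symmDiff (A * {k}) A ∪ symmDiff (B * {k}) B := by
  intro x
  simp only [Set.mem_symmDiff, mem_mul_singleton, Set.mem_union]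
  tauto

lemma key4 (A B : Set G) (k : G) :
    symmDiff ((A ∩ B) * {k}) (A ∩ B) ⊆ symmDiff (A * {k}) A ∪ symmDiff (B * {k}) B := by
  have h : (A ∩ B) * ({k} : Set G) = (A * {k}) ∩ (B * {k}) := by
    ext x
    simp only [mem_mul_singleton, Set.mem_inter_iff]
  rw [h]
  intro x
  simp only [Set.mem_symmDiff, mem_mul_singleton, Set.mem_inter_iff, Set.mem_union]
  tauto

/-- The master bound used for complements. -/
lemma key_compl {A K : Set G} (hK : K.Nonempty) :
    symmDiff (Aᶜ * K) Aᶜ ⊆ symmDiff (A * K) A ∪ (symmDiff (A * K⁻¹) A) * K := by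
  intro x hx
  rw [Set.mem_symmDiff] at hx
  rcases hx with ⟨h1, h2⟩ | ⟨h1, h2⟩
  · obtain ⟨y, hy, k, hk, rfl⟩ := h1
    right
    rw [Set.mem_compl_iff, not_not] at h2
    refine ⟨y, ?_, k, hk, rfl⟩
    rw [Set.mem_symmDiff]
    left
    exact ⟨⟨y * k, h2, k⁻¹, inv_mem_inv.mpr hk, by group⟩, hy⟩
  · obtain ⟨k, hk⟩ := hK
    left
    rw [Set.mem_symmDiff]
    left
    have hxk : x * k⁻¹ ∈ A := by
      by_contra hc
      exact h2 ⟨x * k⁻¹, hc, k, hk, by group⟩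
    exact ⟨⟨x * k⁻¹, hxk, k, hk, by group⟩, h1⟩

/-- The bound `M A K` is bounded for `A ∈ UG G` and compact nonempty `K`. -/
lemma M_bdd {A K : Set G} (hA : A ∈ UG G) (hKne : K.Nonempty) (hK : IsCompact K) :
    Bdd (symmDiff (A * K) A ∪ (symmDiff (A * K⁻¹) A) * K) :=
  bdd_union (hA.2 K hKne hK) (bdd_mul (hA.2 K⁻¹ hKne.inv hK.inv) hK)

end Aux

/-- `U⁺` is a Boolean algebra under symmetric difference and intersection in which the
bounded sets form an ideal, and `U^G` is a subalgebra of `U⁺` containing the bounded sets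
and invariant under left translations. -/
theorem Uplus_booleanAlgebra_and_UG_subalgebra (G : Type*)
    [Group G] [TopologicalSpace G] [IsTopologicalGroup G] [LocallyCompactSpace G] [T2Space G] :
    (∅ : Set G) ∈ Uplus G ∧ (Set.univ : Set G) ∈ Uplus G ∧
      (∀ A ∈ Uplus G, Aᶜ ∈ Uplus G) ∧
      (∀ A ∈ Uplus G, ∀ B ∈ Uplus G, symmDiff A B ∈ Uplus G) ∧
      (∀ A ∈ Uplus G, ∀ B ∈ Uplus G, A ∩ B ∈ Uplus G) ∧
      (∀ A : Set G, Bdd A → A ∈ Uplus G) ∧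
      (∀ A B : Set G, Bdd A → Bdd B → Bdd (symmDiff A B)) ∧
      (∀ A : Set G, Bdd A → ∀ C ∈ Uplus G, C ∩ A ∈ {B : Set G | Bdd B}) ∧
      (∅ : Set G) ∈ UG G ∧ (Set.univ : Set G) ∈ UG G ∧
      (∀ A ∈ UG G, Aᶜ ∈ UG G) ∧
      (∀ A ∈ UG G, ∀ B ∈ UG G, symmDiff A B ∈ UG G) ∧
      (∀ A ∈ UG G, ∀ B ∈ UG G, A ∩ B ∈ UG G) ∧
      (∀ A : Set G, Bdd A → A ∈ UG G) ∧
      (∀ g : G, ∀ A ∈ UG G, (fun x => g * x) '' A ∈ UG G) := by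
  have hUcompl : ∀ A ∈ Uplus G, Aᶜ ∈ Uplus G := by
    intro A hA
    simpa only [Uplus, Set.mem_setOf_eq, frontier_compl] using hA
  have hUsymm : ∀ A ∈ Uplus G, ∀ B ∈ Uplus G, symmDiff A B ∈ Uplus G := by
    intro A hA B hB
    exact (hA.union hB).of_isClosed_subset isClosed_frontier (frontier_symmDiff_subset A B)
  have hUinter : ∀ A ∈ Uplus G, ∀ B ∈ Uplus G, A ∩ B ∈ Uplus G := by
    intro A hA B hB
    exact (hA.union hB).of_isClosed_subset isClosed_frontier (frontier_inter_subset' A B)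
  have hBddUG : ∀ A : Set G, Bdd A → A ∈ UG G := by
    intro A hA
    refine ⟨bdd_uplus hA, fun K hKne hK => ?_⟩
    refine bdd_mono (bdd_union (bdd_mul hA hK) hA) ?_
    exact symmDiff_subset_union.trans subset_rfl
  have hEmptyUG : (∅ : Set G) ∈ UG G := hBddUG ∅ ⟨∅, isCompact_empty, subset_rfl⟩
  have hUnivUG : (Set.univ : Set G) ∈ UG G := by
    refine ⟨by simp [Uplus], fun K hKne hK => ?_⟩
    have : (Set.univ : Set G) * K = Set.univ := by
      obtain ⟨k, hk⟩ := hKne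
      ext x
      simp only [Set.mem_univ, iff_true]
      exact ⟨x * k⁻¹, trivial, k, hk, by group⟩
    rw [this, symmDiff_self]
    exact ⟨∅, isCompact_empty, subset_rfl⟩
  have hComplUG : ∀ A ∈ UG G, Aᶜ ∈ UG G := by
    intro A hA
    refine ⟨hUcompl A hA.1, fun K hKne hK => ?_⟩
    exact bdd_mono (M_bdd hA hKne hK) (key_compl hKne)
  have hSymmUG : ∀ A ∈ UG G, ∀ B ∈ UG G, symmDiff A B ∈ UG G := by
    intro A hA B hB
    refine ⟨hUsymm A hA.1 B hB.1, fun K hKne hK => ?_⟩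
    refine bdd_mono (bdd_union (M_bdd hA hKne hK) (M_bdd hB hKne hK)) ?_
    refine key2 hKne fun k hk => (key3 A B k).trans ?_
    exact union_subset_union (key1 hk) (key1 hk)
  have hInterUG : ∀ A ∈ UG G, ∀ B ∈ UG G, A ∩ B ∈ UG G := by
    intro A hA B hB
    refine ⟨hUinter A hA.1 B hB.1, fun K hKne hK => ?_⟩
    refine bdd_mono (bdd_union (M_bdd hA hKne hK) (M_bdd hB hKne hK)) ?_
    refine key2 hKne fun k hk => (key4 A B k).trans ?_
    exact union_subset_union (key1 hk) (key1 hk)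
  have hTransUG : ∀ g : G, ∀ A ∈ UG G, (fun x => g * x) '' A ∈ UG G := by
    intro g A hA
    have himg : (fun x => g * x) '' A = ({g} : Set G) * A := (Set.singleton_mul).symm
    constructor
    · rw [himg, Set.singleton_mul]
      have : (g * ·) '' A = (Homeomorph.mulLeft g) '' A := rfl
      rw [Uplus, Set.mem_setOf_eq, this, ← Homeomorph.image_frontier]
      exact hA.1.image (Homeomorph.mulLeft g).continuous
    · intro K hKne hK
      rw [himg, mul_assoc]
      have hinj : Function.Injective (fun x : G => g * x) := fun a b h => by
        simpa using mul_left_cancel h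
      have h1 : ({g} : Set G) * (A * K) = (fun x => g * x) '' (A * K) := Set.singleton_mul
      have h2 : ({g} : Set G) * A = (fun x => g * x) '' A := Set.singleton_mul
      rw [h1, h2, ← Set.image_symmDiff hinj]
      obtain ⟨C, hC, hsub⟩ := hA.2 K hKne hK
      exact ⟨(fun x => g * x) '' C, hC.image (continuous_mul_left g),
        Set.image_mono hsub⟩
  refine ⟨by simp [Uplus], by simp [Uplus], hUcompl, hUsymm, hUinter,
    fun A hA => bdd_uplus hA,
    fun A B hA hB => bdd_mono (bdd_union hA hB) symmDiff_subset_union,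
    fun A hA C _ => bdd_mono hA inter_subset_right,
    hEmptyUG, hUnivUG, hComplUG, hSymmUG, hInterUG, hBddUG, hTransUG⟩
end

section
/- Let G be a locally compact compactly generated Hausdorff group and X a Specker compactification of G with boundary Λ = X \ G. For every λ ∈ Λ, the family B_λ of neighborhoods V of λ in X such that |∂_Γ(V ∩ G)| is bounded and G \ V is Γ-connected is a neighborhood basis at λ. -/
open Set Pointwise Filter Topology

/-- The Cayley graph of `G` with respect to `F`. -/
def cayley {G : Type*} [Group G] (F : Set G) : Set (G × G) :=
  {p | ∃ f ∈ F, p.2 = p.1 * f}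

/-- `A` is `Γ`-connected: any two points of `A` are joined by a `Γ`-path in `A`. -/
def GammaConnected {G : Type*} (Γ : Set (G × G)) (A : Set G) : Prop :=
  ∀ g ∈ A, ∀ h ∈ A, ∃ (n : ℕ) (x : ℕ → G), x 0 = g ∧ x n = h ∧
    (∀ i ≤ n, x i ∈ A) ∧ ∀ i < n, (x i, x (i + 1)) ∈ Γ

section WalkAux
variable {G : Type*} [Group G] {F A B : Set G} {g h k : G}

/-- A `Γ`-walk from `g` to `h` inside `A`. -/
def Walk (F A : Set G) (g h : G) : Prop :=
  ∃ (n : ℕ) (x : ℕ → G), x 0 = g ∧ x n = h ∧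
    (∀ i ≤ n, x i ∈ A) ∧ ∀ i < n, (x i, x (i + 1)) ∈ cayley F

lemma mem_of_symm (hFsymm : F⁻¹ = F) (hf : g ∈ F) : g⁻¹ ∈ F := by
  rw [← hFsymm]; exact Set.inv_mem_inv.mpr hf

lemma walk_refl (hg : g ∈ A) : Walk F A g g :=
  ⟨0, fun _ => g, rfl, rfl, fun _ _ => hg, fun i hi => absurd hi (Nat.not_lt_zero i)⟩

lemma walk_mono (hAB : A ⊆ B) : Walk F A g h → Walk F B g h := by
  rintro ⟨n, x, h0, hn, hA, hE⟩
  exact ⟨n, x, h0, hn, fun i hi => hAB (hA i hi), hE⟩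

lemma walk_step (hg : g ∈ A) (hh : h ∈ A) (e : (g, h) ∈ cayley F) : Walk F A g h := by
  refine ⟨1, fun i => if i = 0 then g else h, by simp, by simp, ?_, ?_⟩
  · intro i _; dsimp only; split_ifs <;> assumption
  · intro i hi
    interval_cases i
    simpa using e

lemma walk_trans : Walk F A g h → Walk F A h k → Walk F A g k := by
  rintro ⟨n, x, hx0, hxn, hxA, hxE⟩ ⟨m, y, hy0, hym, hyA, hyE⟩
  refine ⟨n + m, fun i => if i ≤ n then x i else y (i - n), by simp [hx0], ?_, ?_, ?_⟩
  · by_cases hm : m = 0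
    · subst hm; simpa [hxn, ← hy0, hym]
    · have : ¬ (n + m ≤ n) := by omega
      simp only [this, if_false]
      rw [Nat.add_sub_cancel_left, hym]
  · intro i hi
    dsimp only; split_ifs with h'
    · exact hxA i h'
    · exact hyA (i - n) (by omega)
  · intro i hi
    dsimp only
    rcases lt_trichotomy i n with h' | rfl | h'
    · simp only [if_pos h'.le, if_pos (show i + 1 ≤ n by omega)]
      exact hxE i h'
    · simp only [le_refl, if_pos, if_neg (by omega : ¬ i + 1 ≤ i)]
      have := hyE 0 (by omega)
      rw [hy0, ← hxn] at this
      simpa using this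
    · simp only [if_neg (by omega : ¬ i ≤ n), if_neg (by omega : ¬ i + 1 ≤ n)]
      have := hyE (i - n) (by omega)
      have e1 : i - n + 1 = i + 1 - n := by omega
      rwa [e1] at this

lemma walk_symm (hFsymm : F⁻¹ = F) : Walk F A g h → Walk F A h g := by
  rintro ⟨n, x, hx0, hxn, hxA, hxE⟩
  refine ⟨n, fun i => x (n - i), by simp [hxn], by simp [hx0], ?_, ?_⟩
  · intro i _; exact hxA _ (by omega)
  · intro i hi
    obtain ⟨f, hf, hff⟩ := hxE (n - i - 1) (by omega)
    refine ⟨f⁻¹, mem_of_symm hFsymm hf, ?_⟩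
    have hff' : x (n - i - 1 + 1) = x (n - i - 1) * f := hff
    have e1 : n - i - 1 + 1 = n - i := by omega
    have e2 : n - (i + 1) = n - i - 1 := by omega
    rw [e1] at hff'
    show x (n - (i + 1)) = x (n - i) * f⁻¹
    rw [e2, hff', mul_assoc, mul_inv_cancel, mul_one]

lemma walk_univ_pow {n : ℕ} (hw : k ∈ F ^ n) : Walk F (Set.univ : Set G) g (g * k) := by
  induction n generalizing k with
  | zero =>
    rw [pow_zero, Set.mem_one] at hw
    subst hw
    simpa using walk_refl (Set.mem_univ g)
  | succ n ih =>
    rw [pow_succ] at hw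
    obtain ⟨v, hv, f, hf, rfl⟩ := hw
    refine walk_trans (ih hv) (walk_step (Set.mem_univ _) (Set.mem_univ _) ⟨f, hf, ?_⟩)
    show g * (v * f) = g * v * f
    rw [mul_assoc]

lemma walk_univ (hFgen : ∀ g : G, ∃ n : ℕ, g ∈ F ^ n) (g h : G) :
    Walk F (Set.univ : Set G) g h := by
  obtain ⟨n, hn⟩ := hFgen (g⁻¹ * h)
  simpa using walk_univ_pow (g := g) hn

end WalkAux

section Conn
variable {G : Type*} [Group G] [TopologicalSpace G] [IsTopologicalGroup G]

lemma exists_finite_connector {F A K : Set G}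
    (hF1 : F ∈ 𝓝 (1 : G)) (hFsymm : F⁻¹ = F) (hFgen : ∀ g : G, ∃ n : ℕ, g ∈ F ^ n)
    (hAo : IsOpen A) (hAne : A.Nonempty) (hKc : IsCompact K)
    (hK : (A * F) ∩ (Aᶜ * F) ⊆ K) :
    ∃ P : Set G, P.Finite ∧ GammaConnected (cayley F) (Aᶜ ∪ P) := by
  classical
  by_cases hB : Aᶜ = ∅
  · refine ⟨∅, Set.finite_empty, ?_⟩
    intro g hg
    rw [hB] at hg
    simp at hg
  · obtain ⟨b₀, hb₀⟩ := Set.nonempty_iff_ne_empty.mpr hB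
    have h1F : (1 : G) ∈ F := mem_of_mem_nhds hF1
    have hBcl : IsClosed Aᶜ := hAo.isClosed_compl
    -- every point of Aᶜ reaches K ∩ Aᶜ within Aᶜ
    have hexit : ∀ b ∈ Aᶜ, ∃ k ∈ K ∩ Aᶜ, Walk F Aᶜ b k := by
      intro b hb
      obtain ⟨a, ha⟩ := hAne
      obtain ⟨n, xw, hx0, hxn, -, hxE⟩ := walk_univ hFgen b a
      have hex : ∃ i, xw i ∈ A := ⟨n, hxn ▸ ha⟩
      set i₀ := Nat.find hex with hi₀def
      have hi₀A : xw i₀ ∈ A := Nat.find_spec hex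
      have hi₀le : i₀ ≤ n := Nat.find_min' hex (hxn ▸ ha)
      have hi₀pos : 0 < i₀ := by
        rcases Nat.eq_zero_or_pos i₀ with h0 | h0
        · rw [h0] at hi₀A; rw [hx0] at hi₀A; exact absurd hi₀A hb
        · exact h0
      have hmin : ∀ j < i₀, xw j ∈ Aᶜ := fun j hj => Nat.find_min hex hj
      refine ⟨xw (i₀ - 1), ⟨?_, hmin _ (by omega)⟩, ?_⟩
      · obtain ⟨f, hf, hff⟩ := hxE (i₀ - 1) (by omega)
        have hff' : xw (i₀ - 1 + 1) = xw (i₀ - 1) * f := hff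
        rw [show i₀ - 1 + 1 = i₀ by omega] at hff'
        refine hK ⟨⟨xw i₀, hi₀A, f⁻¹, mem_of_symm hFsymm hf, ?_⟩,
          ⟨xw (i₀ - 1), hmin _ (by omega), 1, h1F, mul_one _⟩⟩
        show xw i₀ * f⁻¹ = xw (i₀ - 1)
        rw [hff', mul_assoc, mul_inv_cancel, mul_one]
      · exact ⟨i₀ - 1, xw, hx0, rfl, fun i hi => hmin i (by omega),
          fun i hi => hxE i (by omega)⟩
    -- finitely many representatives
    have hDc : IsCompact (K ∩ Aᶜ) := hKc.inter_right hBcl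
    have h1int : (1 : G) ∈ interior F := mem_interior_iff_mem_nhds.mpr hF1
    obtain ⟨t, htmem, htcov⟩ := hDc.elim_nhds_subcover (fun g => (g * ·) '' interior F)
      (fun g _ => (isOpenMap_mul_left g _ isOpen_interior).mem_nhds ⟨1, h1int, mul_one g⟩)
    -- every point of Aᶜ reaches some element of t within Aᶜ
    have hreach : ∀ b ∈ Aᶜ, ∃ g ∈ t, Walk F Aᶜ b g := by
      intro b hb
      obtain ⟨k, hk, hwk⟩ := hexit b hb
      have hcov := htcov hk
      simp only [Set.mem_iUnion, exists_prop] at hcov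
      obtain ⟨g, hgt, f, hf, hfk⟩ := hcov
      refine ⟨g, hgt, walk_trans hwk (walk_step hk.2 (htmem g hgt).2 ⟨f⁻¹,
        mem_of_symm hFsymm (interior_subset hf), ?_⟩)⟩
      show g = k * f⁻¹
      rw [← hfk]
      rw [mul_assoc, mul_inv_cancel, mul_one]
    obtain ⟨g₁, hg₁t, -⟩ := hreach b₀ hb₀
    -- connect all of t to g₁ through finitely many auxiliary points
    have hwu : ∀ g : G, Walk F (Set.univ : Set G) g g₁ := fun g => walk_univ hFgen g g₁
    choose nn xx h0 hn hmem hE using hwu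
    set P : Set G := ⋃ g ∈ t, xx g '' Set.Iic (nn g) with hPdef
    have hPfin : P.Finite :=
      t.finite_toSet.biUnion (fun g _ => (Set.finite_Iic _).image _)
    refine ⟨P, hPfin, ?_⟩
    have hPE : P ⊆ Aᶜ ∪ P := subset_union_right
    -- each point of P walks to g₁ within Aᶜ ∪ P
    have key2 : ∀ p ∈ P, Walk F (Aᶜ ∪ P) p g₁ := by
      intro p hp
      simp only [hPdef, mem_iUnion, mem_image, mem_Iic] at hp
      obtain ⟨g, hgt, i, hi, rfl⟩ := hp
      refine ⟨nn g - i, fun j => xx g (i + j), by simp, ?_, ?_, ?_⟩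
      · show xx g (i + (nn g - i)) = g₁
        rw [show i + (nn g - i) = nn g by omega, hn]
      · intro j hj
        refine Or.inr ?_
        show xx g (i + j) ∈ P
        simp only [hPdef, mem_iUnion, mem_image, mem_Iic]
        exact ⟨g, hgt, i + j, by omega, rfl⟩
      · intro j hj
        show (xx g (i + j), xx g (i + (j + 1))) ∈ cayley F
        rw [show i + (j + 1) = i + j + 1 by omega]
        exact hE g (i + j) (by omega)
    have key1 : ∀ g ∈ t, Walk F (Aᶜ ∪ P) g g₁ := by
      intro g hgt
      refine key2 g ?_
      simp only [hPdef, mem_iUnion, mem_image, mem_Iic]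
      exact ⟨g, hgt, 0, Nat.zero_le _, h0 g⟩
    have key3 : ∀ e ∈ Aᶜ ∪ P, Walk F (Aᶜ ∪ P) e g₁ := by
      intro e he
      rcases he with he | he
      · obtain ⟨g, hgt, hw⟩ := hreach e he
        exact walk_trans (walk_mono subset_union_left hw) (key1 g hgt)
      · exact key2 e he
    intro g hg h hh
    exact walk_trans (key3 g hg) (walk_symm hFsymm (key3 h hh))

end Conn


/-- In a Specker compactification `X` of a compactly generated locally compact group `G`,
for every boundary point `x` the neighborhoods `V` of `x` with `|∂_Γ(V ∩ G)|` bounded and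
`G \ V` Γ-connected form a neighborhood basis at `x`. -/
theorem specker_nhds_basis {G X : Type*}
    [Group G] [TopologicalSpace G] [IsTopologicalGroup G] [LocallyCompactSpace G] [T2Space G]
    (F : Set G) (hFc : IsCompact F) (hF1 : F ∈ nhds (1 : G)) (hFsymm : F⁻¹ = F)
    (hFgen : ∀ g : G, ∃ n : ℕ, g ∈ F ^ n)
    [TopologicalSpace X] [CompactSpace X] [T2Space X]
    (ι : G → X) (hemb : Topology.IsEmbedding ι)
    (hopen : IsOpen (Set.range ι)) (hdense : Dense (Set.range ι))
    (htd : IsTotallyDisconnected (Set.range ι)ᶜ)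
    (R : G → X → X) (hR1 : ∀ g h : G, R g (ι h) = ι (h * g))
    (hR2 : ∀ (g : G) (y : X), y ∉ Set.range ι → R g y = y)
    (hRcont : Continuous fun p : G × X => R p.1 p.2)
    (L : G → X → X) (hLcont : ∀ g : G, Continuous (L g))
    (hL : ∀ g h : G, L g (ι h) = ι (g * h))
    (x : X) (hx : x ∉ Set.range ι) :
    (nhds x).HasBasis (fun V : Set X => V ∈ nhds x ∧ Bdd ((ι ⁻¹' V * F) ∩ ((ι ⁻¹' V)ᶜ * F)) ∧
      GammaConnected (cayley F) (ι ⁻¹' V)ᶜ) id := by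
  apply Filter.hasBasis_self.2
  intro t ht
  set Λ : Set X := (Set.range ι)ᶜ with hΛdef
  have hΛcl : IsClosed Λ := hopen.isClosed_compl
  haveI : CompactSpace Λ := isCompact_iff_compactSpace.mp hΛcl.isCompact
  haveI : TotallyDisconnectedSpace Λ := totallyDisconnectedSpace_subtype_iff.mpr htd
  have hxi : x ∈ interior t := mem_interior_iff_mem_nhds.mpr ht
  obtain ⟨c, hc, hxc, hcsub⟩ := compact_exists_isClopen_in_isOpen (X := Λ)
    (isOpen_interior.preimage continuous_subtype_val)
    (show (⟨x, hx⟩ : Λ) ∈ Subtype.val ⁻¹' interior t from hxi)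
  set C : Set X := Subtype.val '' c with hCdef
  set C' : Set X := Subtype.val '' cᶜ with hC'def
  have hCc : IsCompact C := (hc.isClosed.isCompact).image continuous_subtype_val
  have hC'c : IsCompact C' := (hc.compl.isClosed.isCompact).image continuous_subtype_val
  have hxC : x ∈ C := ⟨⟨x, hx⟩, hxc, rfl⟩
  have hCsub : C ⊆ interior t := by rintro _ ⟨y, hy, rfl⟩; exact hcsub hy
  have hCΛ : C ⊆ Λ := by rintro _ ⟨y, hy, rfl⟩; exact y.2
  have hCC' : C ⊆ C'ᶜ := by
    rintro _ ⟨y, hy, rfl⟩ ⟨z, hz, hzy⟩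
    exact hz (by rwa [Subtype.val_injective hzy])
  have hΛsub : ∀ y ∈ Λ, y ∈ C ∪ C' := by
    intro y hy
    by_cases h : (⟨y, hy⟩ : Λ) ∈ c
    · exact Or.inl ⟨⟨y, hy⟩, h, rfl⟩
    · exact Or.inr ⟨⟨y, hy⟩, h, rfl⟩
  -- a slightly larger open set V'
  obtain ⟨V', hV'o, hCV', hclV'⟩ := normal_exists_closure_subset hCc.isClosed
    (isOpen_interior.inter hC'c.isClosed.isOpen_compl) (subset_inter hCsub hCC')
  -- first tube: R(F × V) ⊆ V'
  have htube : ∀ O : Set X, IsOpen O → C ⊆ O →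
      ∃ v : Set X, IsOpen v ∧ C ⊆ v ∧ ∀ f ∈ F, ∀ y ∈ v, R f y ∈ O := by
    intro O hOo hCO
    have hsub : F ×ˢ C ⊆ (fun p : G × X => R p.1 p.2) ⁻¹' O := by
      rintro ⟨f, y⟩ ⟨-, hy⟩
      have : R f y = y := hR2 f y (hCΛ hy)
      simpa [this] using hCO hy
    obtain ⟨u, v, -, hvo, hFu, hCv, huv⟩ :=
      generalized_tube_lemma hFc hCc (hOo.preimage hRcont) hsub
    exact ⟨v, hvo, hCv, fun f hf y hy => huv (Set.mk_mem_prod (hFu hf) hy)⟩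
  obtain ⟨v1, hv1o, hCv1, hRv1⟩ := htube V' hV'o hCV'
  set V : Set X := v1 ∩ V' with hVdef
  have hVo : IsOpen V := hv1o.inter hV'o
  have hCV : C ⊆ V := subset_inter hCv1 hCV'
  have hRV : ∀ f ∈ F, ∀ y ∈ V, R f y ∈ V' := fun f hf y hy => hRv1 f hf y hy.1
  obtain ⟨v2, hv2o, hCv2, hRv2⟩ := htube V hVo hCV
  set W : Set X := v2 ∩ V with hWdef
  have hWo : IsOpen W := hv2o.inter hVo
  have hCW : C ⊆ W := subset_inter hCv2 hCV
  have hRW : ∀ f ∈ F, ∀ y ∈ W, R f y ∈ V := fun f hf y hy => hRv2 f hf y hy.1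
  set A : Set G := ι ⁻¹' V with hAdef
  have hAo : IsOpen A := hVo.preimage hemb.continuous
  have hxV : x ∈ V := hCV hxC
  have hAne : A.Nonempty := by
    obtain ⟨y, hyr, hyV⟩ := hdense.exists_mem_open hVo ⟨x, hxV⟩
    obtain ⟨a, rfl⟩ := hyr
    exact ⟨a, hyV⟩
  -- the compact trap for the coboundary
  set S : Set X := closure V' ∩ Wᶜ with hSdef
  have hScl : IsClosed S := isClosed_closure.inter hWo.isClosed_compl
  have hSrange : S ⊆ Set.range ι := by
    rintro y ⟨hy1, hy2⟩
    by_contra hyr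
    rcases hΛsub y hyr with h | h
    · exact hy2 (hCW h)
    · exact (hclV' hy1).2 h
  set K : Set G := ι ⁻¹' S with hKdef
  have hKc : IsCompact K := by
    rw [hemb.toIsInducing.isCompact_preimage_iff hSrange]
    exact hScl.isCompact
  have hbd : (A * F) ∩ (Aᶜ * F) ⊆ K := by
    rintro g ⟨hg1, hg2⟩
    obtain ⟨a, ha, f, hf, hfa⟩ := hg1
    obtain ⟨b, hb, f', hf', hfb⟩ := hg2
    have h1 : ι g ∈ closure V' := by
      have : R f (ι a) ∈ V' := hRV f hf (ι a) ha
      rw [hR1] at this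
      rw [← hfa]
      exact subset_closure this
    have h2 : ι g ∉ W := by
      intro hw
      have : R f'⁻¹ (ι g) ∈ V := hRW f'⁻¹ (mem_of_symm hFsymm hf') (ι g) hw
      rw [hR1] at this
      have hbg : g * f'⁻¹ = b := by rw [← hfb, mul_assoc, mul_inv_cancel, mul_one]
      rw [hbg] at this
      exact hb this
    exact ⟨h1, h2⟩
  -- connect the components of the complement
  obtain ⟨P, hPfin, hPconn⟩ := exists_finite_connector hF1 hFsymm hFgen hAo hAne hKc hbd
  have hPcl : IsClosed (ι '' P) := (hPfin.image ι).isClosed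
  refine ⟨V \ ι '' P, ?_, ⟨?_, ?_⟩, ?_⟩
  · refine (hVo.sdiff hPcl).mem_nhds ⟨hxV, ?_⟩
    rintro ⟨p, -, hpx⟩
    exact hx ⟨p, hpx⟩
  · have hpre : ι ⁻¹' (V \ ι '' P) = A \ P := by
      rw [Set.preimage_diff, Set.preimage_image_eq P hemb.injective]
    rw [hpre]
    refine ⟨K ∪ P * F, hKc.union (hPfin.isCompact.mul hFc), ?_⟩
    rintro g ⟨hg1, hg2⟩
    have hg1' : g ∈ A * F := Set.mul_subset_mul_right Set.diff_subset hg1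
    have hcompl : (A \ P)ᶜ = Aᶜ ∪ P := by
      rw [Set.diff_eq, Set.compl_inter, compl_compl]
    rw [hcompl, Set.union_mul] at hg2
    rcases hg2 with hg2 | hg2
    · exact Or.inl (hbd ⟨hg1', hg2⟩)
    · exact Or.inr hg2
  · have hpre : ι ⁻¹' (V \ ι '' P) = A \ P := by
      rw [Set.preimage_diff, Set.preimage_image_eq P hemb.injective]
    rw [hpre, Set.diff_eq, Set.compl_inter, compl_compl]
    exact hPconn
  · exact fun y hy => interior_subset (hclV' (subset_closure hy.1.2)).1
end

section
/- Let G be a locally compact Hausdorff group and X, Y two quasi-Specker compactifications of G. Let S(X,Y) be the closure in X × Y of the diagonal {(g,g) | g ∈ G}. Then S(X,Y) is a quasi-Specker compactification of G; moreover S(X,Y) \ Δ(G) ⊆ (X \ G) × (Y \ G), and if X and Y are Specker compactifications (i.e., with totally disconnected boundaries), then so is S(X,Y). -/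
open Set Topology Filter

/-- `Y` together with an embedding `ι : G → Y` is a quasi-Specker compactification of `G`. -/
structure IsQuasiSpecker (G : Type*) [Group G] [TopologicalSpace G]
    (Y : Type*) [TopologicalSpace Y] (ι : G → Y) : Prop where
  compact : CompactSpace Y
  t2 : T2Space Y
  emb : Topology.IsEmbedding ι
  open_range : IsOpen (Set.range ι)
  dense_range : Dense (Set.range ι)
  right_cont : ∃ R : G → Y → Y, (∀ g h : G, R g (ι h) = ι (h * g)) ∧
    (∀ (g : G) (y : Y), y ∉ Set.range ι → R g y = y) ∧
    Continuous fun p : G × Y => R p.1 p.2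
  left_ext : ∀ g : G, ∃ Lg : Y → Y, Continuous Lg ∧ ∀ h : G, Lg (ι h) = ι (g * h)


lemma quasiSpecker_diag_aux {G X Y : Type*} [TopologicalSpace G]
    [TopologicalSpace X] [TopologicalSpace Y] [T2Space Y]
    {ιX : G → X} {ιY : G → Y} (hemb : IsInducing ιX) (hcont : Continuous ιY)
    {p : X × Y} (hp : p ∈ closure {p : X × Y | ∃ g : G, p = (ιX g, ιY g)})
    {g : G} (h1 : p.1 = ιX g) : p.2 = ιY g := by
  set f : G → X × Y := fun g => (ιX g, ιY g) with hf
  have hDr : {p : X × Y | ∃ g : G, p = (ιX g, ιY g)} = range f := by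
    ext q; simp [hf, eq_comm]
  rw [hDr] at hp
  set v : Filter G := comap f (𝓝 p) with hv
  have hmap : map f v = 𝓝 p ⊓ 𝓟 (range f) := Filter.map_comap _ _
  have hne : (𝓝 p ⊓ 𝓟 (range f)).NeBot := mem_closure_iff_clusterPt.mp hp
  have hvne : v.NeBot := by
    rw [← Filter.map_neBot_iff f, hmap]; exact hne
  have htf : Tendsto f v (𝓝 p) := by
    rw [Tendsto, hmap]; exact inf_le_left
  have htX : Tendsto ιX v (𝓝 (ιX g)) := by
    have := (continuous_fst.tendsto p).comp htf
    rwa [h1] at this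
  have hvg : v ≤ 𝓝 g := by
    rw [hemb.nhds_eq_comap g]
    exact tendsto_iff_comap.mp htX
  have htY1 : Tendsto ιY v (𝓝 (ιY g)) := (hcont.tendsto g).mono_left hvg
  have htY2 : Tendsto ιY v (𝓝 p.2) := (continuous_snd.tendsto p).comp htf
  exact tendsto_nhds_unique htY2 htY1

lemma quasiSpecker_diag_aux' {G X Y : Type*} [TopologicalSpace G]
    [TopologicalSpace X] [TopologicalSpace Y] [T2Space X]
    {ιX : G → X} {ιY : G → Y} (hcont : Continuous ιX) (hemb : IsInducing ιY)
    {p : X × Y} (hp : p ∈ closure {p : X × Y | ∃ g : G, p = (ιX g, ιY g)})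
    {g : G} (h2 : p.2 = ιY g) : p.1 = ιX g := by
  set f : G → X × Y := fun g => (ιX g, ιY g) with hf
  have hDr : {p : X × Y | ∃ g : G, p = (ιX g, ιY g)} = range f := by
    ext q; simp [hf, eq_comm]
  rw [hDr] at hp
  set v : Filter G := comap f (𝓝 p) with hv
  have hmap : map f v = 𝓝 p ⊓ 𝓟 (range f) := Filter.map_comap _ _
  have hne : (𝓝 p ⊓ 𝓟 (range f)).NeBot := mem_closure_iff_clusterPt.mp hp
  have hvne : v.NeBot := by
    rw [← Filter.map_neBot_iff f, hmap]; exact hne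
  have htf : Tendsto f v (𝓝 p) := by
    rw [Tendsto, hmap]; exact inf_le_left
  have htY : Tendsto ιY v (𝓝 (ιY g)) := by
    have := (continuous_snd.tendsto p).comp htf
    rwa [h2] at this
  have hvg : v ≤ 𝓝 g := by
    rw [hemb.nhds_eq_comap g]
    exact tendsto_iff_comap.mp htY
  have htX1 : Tendsto ιX v (𝓝 (ιX g)) := (hcont.tendsto g).mono_left hvg
  have htX2 : Tendsto ιX v (𝓝 p.1) := (continuous_fst.tendsto p).comp htf
  exact tendsto_nhds_unique htX2 htX1

lemma isTotallyDisconnected_prod {X Y : Type*} [TopologicalSpace X] [TopologicalSpace Y]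
    {s : Set X} {t : Set Y} (hs : IsTotallyDisconnected s) (ht : IsTotallyDisconnected t) :
    IsTotallyDisconnected (s ×ˢ t) := by
  intro u hu hcon a ha b hb
  have h1 : Prod.fst '' u ⊆ s := by
    rintro - ⟨q, hq, rfl⟩; exact (hu hq).1
  have h2 : Prod.snd '' u ⊆ t := by
    rintro - ⟨q, hq, rfl⟩; exact (hu hq).2
  have hs1 := hs _ h1 (hcon.image _ continuous_fst.continuousOn)
  have hs2 := ht _ h2 (hcon.image _ continuous_snd.continuousOn)
  exact Prod.ext (hs1 (mem_image_of_mem _ ha) (mem_image_of_mem _ hb))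
    (hs2 (mem_image_of_mem _ ha) (mem_image_of_mem _ hb))

/-- The closure `S(X,Y)` of the diagonal copy of `G` in the product of two quasi-Specker
compactifications is a quasi-Specker compactification; its boundary lies in
`(X \ G) × (Y \ G)`; and if `X` and `Y` are Specker (totally disconnected boundaries),
then so is `S(X,Y)`. -/
theorem diagonal_closure_isQuasiSpecker {G X Y : Type*}
    [Group G] [TopologicalSpace G] [IsTopologicalGroup G] [LocallyCompactSpace G] [T2Space G]
    [TopologicalSpace X] [TopologicalSpace Y]
    (ιX : G → X) (ιY : G → Y)
    (hX : IsQuasiSpecker G X ιX) (hY : IsQuasiSpecker G Y ιY)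
    (ι : G → ↥(closure {p : X × Y | ∃ g : G, p = (ιX g, ιY g)}))
    (hι : ∀ g : G, (ι g : X × Y) = (ιX g, ιY g)) :
    IsQuasiSpecker G (↥(closure {p : X × Y | ∃ g : G, p = (ιX g, ιY g)})) ι ∧
      (∀ p ∈ closure {p : X × Y | ∃ g : G, p = (ιX g, ιY g)},
        (∀ g : G, p ≠ (ιX g, ιY g)) → p.1 ∉ Set.range ιX ∧ p.2 ∉ Set.range ιY) ∧
      (IsTotallyDisconnected (Set.range ιX)ᶜ → IsTotallyDisconnected (Set.range ιY)ᶜ →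
        IsTotallyDisconnected (Set.range ι)ᶜ) := by
  haveI : CompactSpace X := hX.compact
  haveI : CompactSpace Y := hY.compact
  haveI : T2Space X := hX.t2
  haveI : T2Space Y := hY.t2
  have hfcont : Continuous (fun g : G => (ιX g, ιY g)) :=
    hX.emb.continuous.prodMk hY.emb.continuous
  have hfemb : Topology.IsEmbedding (fun g : G => (ιX g, ιY g)) :=
    Topology.IsEmbedding.of_comp hfcont continuous_fst hX.emb
  have claim1 : ∀ p ∈ closure {p : X × Y | ∃ g : G, p = (ιX g, ιY g)},
      ∀ g : G, p.1 = ιX g → p = (ιX g, ιY g) := fun p hp g h1 =>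
    Prod.ext h1 (quasiSpecker_diag_aux hX.emb.toIsInducing hY.emb.continuous hp h1)
  have claim2 : ∀ p ∈ closure {p : X × Y | ∃ g : G, p = (ιX g, ιY g)},
      ∀ g : G, p.2 = ιY g → p = (ιX g, ιY g) := fun p hp g h2 =>
    Prod.ext (quasiSpecker_diag_aux' hX.emb.continuous hY.emb.toIsInducing hp h2) h2
  have hrange1 : ∀ s : ↥(closure {p : X × Y | ∃ g : G, p = (ιX g, ιY g)}),
      (s ∈ range ι ↔ (s : X × Y).1 ∈ range ιX) := by
    intro s
    constructor
    · rintro ⟨g, rfl⟩; rw [hι]; exact ⟨g, rfl⟩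
    · rintro ⟨g, hg⟩
      exact ⟨g, Subtype.ext (by rw [hι]; exact (claim1 s s.2 g hg.symm).symm)⟩
  have hrange2 : ∀ s : ↥(closure {p : X × Y | ∃ g : G, p = (ιX g, ιY g)}),
      (s ∈ range ι ↔ (s : X × Y).2 ∈ range ιY) := by
    intro s
    constructor
    · rintro ⟨g, rfl⟩; rw [hι]; exact ⟨g, rfl⟩
    · rintro ⟨g, hg⟩
      exact ⟨g, Subtype.ext (by rw [hι]; exact (claim2 s s.2 g hg.symm).symm)⟩
  have hcompeq : Subtype.val ∘ ι = (fun g : G => (ιX g, ιY g)) := funext hι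
  have hιcont : Continuous ι := by
    rw [Topology.IsInducing.subtypeVal.continuous_iff, hcompeq]; exact hfcont
  refine ⟨⟨?_, ?_, ?_, ?_, ?_, ?_, ?_⟩, ?_, ?_⟩
  · -- compact
    exact isCompact_iff_compactSpace.mp isClosed_closure.isCompact
  · infer_instance
  · -- embedding
    exact Topology.IsEmbedding.of_comp hιcont continuous_subtype_val (hcompeq ▸ hfemb)
  · -- open range
    have hro : range ι = Subtype.val ⁻¹' ((range ιX) ×ˢ (univ : Set Y)) := by
      ext s
      simp only [mem_preimage, mem_prod, mem_univ, and_true]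
      exact hrange1 s
    rw [hro]
    exact (hX.open_range.prod isOpen_univ).preimage continuous_subtype_val
  · -- dense range
    intro s
    rw [closure_subtype]
    have himg : Subtype.val '' (range ι) = range (fun g : G => (ιX g, ιY g)) := by
      rw [← Set.range_comp, hcompeq]
    rw [himg]
    have hsub : closure {p : X × Y | ∃ g : G, p = (ιX g, ιY g)} ⊆
        closure (range (fun g : G => (ιX g, ιY g))) :=
      closure_mono (by rintro q ⟨g, rfl⟩; exact ⟨g, rfl⟩)
    exact hsub s.2
  · -- right_cont
    obtain ⟨RX, hRX1, hRX2, hRX3⟩ := hX.right_cont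
    obtain ⟨RY, hRY1, hRY2, hRY3⟩ := hY.right_cont
    have hΦS : ∀ g : G, ∀ p ∈ closure {p : X × Y | ∃ g : G, p = (ιX g, ιY g)},
        (RX g p.1, RY g p.2) ∈ closure {p : X × Y | ∃ g : G, p = (ιX g, ιY g)} := by
      intro g p hp
      have hc : Continuous (fun p : X × Y => (RX g p.1, RY g p.2)) :=
        (hRX3.comp (continuous_const.prodMk continuous_fst)).prodMk
          (hRY3.comp (continuous_const.prodMk continuous_snd))
      have hmaps : (fun p : X × Y => (RX g p.1, RY g p.2)) ''
          {p : X × Y | ∃ g : G, p = (ιX g, ιY g)} ⊆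
          {p : X × Y | ∃ g : G, p = (ιX g, ιY g)} := by
        rintro - ⟨q, ⟨h, rfl⟩, rfl⟩
        exact ⟨h * g, by simp [hRX1, hRY1]⟩
      have hkey := (image_closure_subset_closure_image hc).trans (closure_mono hmaps)
      exact closure_closure (s := {p : X × Y | ∃ g : G, p = (ιX g, ιY g)}) ▸
        hkey (mem_image_of_mem _ hp)
    refine ⟨fun g s => ⟨(RX g (s : X × Y).1, RY g (s : X × Y).2), hΦS g s.val s.2⟩, ?_, ?_, ?_⟩
    · intro g h
      apply Subtype.ext
      show (RX g ((ι h : X × Y)).1, RY g ((ι h : X × Y)).2) = ((ι (h * g) : X × Y))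
      rw [hι, hι]
      show (RX g (ιX h), RY g (ιY h)) = (ιX (h * g), ιY (h * g))
      rw [hRX1, hRY1]
    · intro g s hs
      apply Subtype.ext
      have h1 : (s : X × Y).1 ∉ range ιX := fun h => hs ((hrange1 s).mpr h)
      have h2 : (s : X × Y).2 ∉ range ιY := fun h => hs ((hrange2 s).mpr h)
      exact Prod.ext (hRX2 g _ h1) (hRY2 g _ h2)
    · apply Continuous.subtype_mk
      exact (hRX3.comp (continuous_fst.prodMk
          ((continuous_subtype_val.comp continuous_snd).fst))).prodMk
        (hRY3.comp (continuous_fst.prodMk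
          ((continuous_subtype_val.comp continuous_snd).snd)))
  · -- left_ext
    intro g
    obtain ⟨LX, hLXc, hLXe⟩ := hX.left_ext g
    obtain ⟨LY, hLYc, hLYe⟩ := hY.left_ext g
    have hΨc : Continuous (fun p : X × Y => (LX p.1, LY p.2)) :=
      (hLXc.comp continuous_fst).prodMk (hLYc.comp continuous_snd)
    have hΨS : ∀ p ∈ closure {p : X × Y | ∃ g : G, p = (ιX g, ιY g)},
        (LX p.1, LY p.2) ∈ closure {p : X × Y | ∃ g : G, p = (ιX g, ιY g)} := by
      intro p hp
      have hmaps : (fun p : X × Y => (LX p.1, LY p.2)) ''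
          {p : X × Y | ∃ g : G, p = (ιX g, ιY g)} ⊆
          {p : X × Y | ∃ g : G, p = (ιX g, ιY g)} := by
        rintro - ⟨q, ⟨h, rfl⟩, rfl⟩
        exact ⟨g * h, by simp [hLXe, hLYe]⟩
      have hkey := (image_closure_subset_closure_image hΨc).trans (closure_mono hmaps)
      exact closure_closure (s := {p : X × Y | ∃ g : G, p = (ιX g, ιY g)}) ▸
        hkey (mem_image_of_mem _ hp)
    refine ⟨fun s => ⟨(LX (s : X × Y).1, LY (s : X × Y).2), hΨS s.val s.2⟩, ?_, ?_⟩
    · exact ((hLXc.comp (continuous_subtype_val.fst)).prodMk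
        (hLYc.comp (continuous_subtype_val.snd))).subtype_mk _
    · intro h
      apply Subtype.ext
      show (LX ((ι h : X × Y)).1, LY ((ι h : X × Y)).2) = ((ι (g * h) : X × Y))
      rw [hι, hι]
      show (LX (ιX h), LY (ιY h)) = (ιX (g * h), ιY (g * h))
      rw [hLXe, hLYe]
  · -- boundary
    intro p hp hne
    constructor
    · rintro ⟨g, hg⟩; exact hne g (claim1 p hp g hg.symm)
    · rintro ⟨g, hg⟩; exact hne g (claim2 p hp g hg.symm)
  · -- totally disconnected
    intro h1 h2
    have hco : (range ι)ᶜ = Subtype.val ⁻¹' (((range ιX)ᶜ) ×ˢ ((range ιY)ᶜ)) := by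
      ext s
      simp only [mem_compl_iff, mem_preimage, mem_prod]
      constructor
      · intro h
        exact ⟨fun hx => h ((hrange1 s).mpr hx), fun hy => h ((hrange2 s).mpr hy)⟩
      · intro h hs
        exact h.1 ((hrange1 s).mp hs)
    rw [hco]
    apply Topology.IsEmbedding.subtypeVal.isTotallyDisconnected
    intro t ht hcon
    exact isTotallyDisconnected_prod h1 h2 t
      (ht.trans (image_preimage_subset _ _)) hcon
end

section
/- Let G be a locally compact compactly generated Hausdorff group with Cayley graph Γ (with respect to a compact symmetric generating neighborhood of 1). For bounded M ⊆ Γ, let v_M be the set of pairs (g,h) ∈ G × G joined by a Γ-path avoiding all edges of M. Then the family V of subsets of G × G containing some v_M (M bounded in Γ ⊆ G × G) is a uniformity on G, and it is separated (exact): ⋂V equals the diagonal. -/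
open Set Pointwise Filter

/-- `v_M`: pairs `(g,h)` joined by a `Γ`-path avoiding all edges of `M`. -/
def vSet {G : Type*} (Γ M : Set (G × G)) : Set (G × G) :=
  {p | ∃ (n : ℕ) (x : ℕ → G), x 0 = p.1 ∧ x n = p.2 ∧
    ∀ i < n, (x i, x (i + 1)) ∈ Γ \ M}

lemma vSet_refl {G : Type*} (Γ M : Set (G × G)) (g : G) : ((g, g) : G × G) ∈ vSet Γ M :=
  ⟨0, fun _ => g, rfl, rfl, fun i hi => absurd hi (Nat.not_lt_zero i)⟩

lemma vSet_anti {G : Type*} (Γ : Set (G × G)) {M M' : Set (G × G)} (h : M ⊆ M') :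
    vSet Γ M' ⊆ vSet Γ M := by
  rintro p ⟨n, x, h0, hn, he⟩
  exact ⟨n, x, h0, hn, fun i hi => ⟨(he i hi).1, fun hm => (he i hi).2 (h hm)⟩⟩

lemma vSet_extend {G : Type*} {Γ M : Set (G × G)} {g a b : G}
    (h : ((g, a) : G × G) ∈ vSet Γ M) (hab : (a, b) ∈ Γ \ M) :
    ((g, b) : G × G) ∈ vSet Γ M := by
  obtain ⟨n, x, h0, hn, he⟩ := h
  refine ⟨n + 1, fun i => if i ≤ n then x i else b, by simp [h0], by simp, ?_⟩
  intro i hi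
  rcases Nat.lt_or_ge i n with h1 | h1
  · simp only []
    rw [if_pos h1.le, if_pos (by omega : i + 1 ≤ n)]
    exact he i h1
  · have hin : i = n := by omega
    subst hin
    simp only []
    rw [if_pos le_rfl, if_neg (by omega), hn]
    exact hab

lemma vSet_trans {G : Type*} {Γ M : Set (G × G)} {g k h : G}
    (h1 : ((g, k) : G × G) ∈ vSet Γ M) (h2 : ((k, h) : G × G) ∈ vSet Γ M) :
    ((g, h) : G × G) ∈ vSet Γ M := by
  obtain ⟨m, y, hy0, hym, hye⟩ := h2
  have key : ∀ j, j ≤ m → ((g, y j) : G × G) ∈ vSet Γ M := by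
    intro j
    induction j with
    | zero => intro _; rwa [hy0]
    | succ j ih => intro hj; exact vSet_extend (ih (by omega)) (hye j (by omega))
  have := key m le_rfl
  rwa [hym] at this

lemma vSet_symm {G : Type*} {Γ M : Set (G × G)} (hΓ : ∀ p ∈ Γ, Prod.swap p ∈ Γ)
    {g h : G} (hp : ((h, g) : G × G) ∈ vSet Γ (Prod.swap '' M)) :
    ((g, h) : G × G) ∈ vSet Γ M := by
  obtain ⟨n, x, h0, hn, he⟩ := hp
  refine ⟨n, fun i => x (n - i), by simpa using hn, by simpa using h0, ?_⟩
  intro i hi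
  dsimp only
  have h1 : n - i - 1 < n := by omega
  have h2 : n - i - 1 + 1 = n - i := by omega
  have h3 : n - (i + 1) = n - i - 1 := by omega
  have hthis := he (n - i - 1) h1
  rw [h2] at hthis
  have hΓ' := hΓ _ hthis.1
  simp only [Prod.swap_prod_mk] at hΓ'
  refine ⟨by rw [h3]; exact hΓ', ?_⟩
  intro hm
  rw [h3] at hm
  exact hthis.2 ⟨_, hm, rfl⟩

lemma cayley_symm {G : Type*} [Group G] {F : Set G} (hFsymm : F⁻¹ = F) :
    ∀ p ∈ cayley F, Prod.swap p ∈ cayley F := by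
  rintro ⟨a, b⟩ ⟨f, hf, hb⟩
  refine ⟨f⁻¹, ?_, ?_⟩
  · rw [← hFsymm]; exact Set.inv_mem_inv.mpr hf
  · simp only [Prod.swap_prod_mk]
    dsimp only at hb
    rw [hb]; group

/-- The family of supersets of the sets `v_M`, for `M` a bounded subset of the Cayley
graph, is a separated (exact) uniformity on `G`: it is a filter of reflexive entourages,
stable under inversion, each entourage contains a composition square of an entourage, and
the intersection of all entourages is the diagonal. -/
theorem visibility_uniformity {G : Type*}
    [Group G] [TopologicalSpace G] [IsTopologicalGroup G] [LocallyCompactSpace G] [T2Space G]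
    (F : Set G) (hFc : IsCompact F) (hF1 : F ∈ nhds (1 : G)) (hFsymm : F⁻¹ = F)
    (hFgen : ∀ g : G, ∃ n : ℕ, g ∈ F ^ n)
    (V : Set (Set (G × G)))
    (hV : V = {v | ∃ M : Set (G × G), M ⊆ cayley F ∧
      (∃ C : Set (G × G), IsCompact C ∧ M ⊆ C) ∧ vSet (cayley F) M ⊆ v}) :
    (Set.univ : Set (G × G)) ∈ V ∧
      (∀ v ∈ V, ∀ w : Set (G × G), v ⊆ w → w ∈ V) ∧
      (∀ v ∈ V, ∀ w ∈ V, v ∩ w ∈ V) ∧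
      (∀ v ∈ V, (SetRel.id : SetRel G G) ⊆ v) ∧
      (∀ v ∈ V, Prod.swap ⁻¹' v ∈ V) ∧
      (∀ v ∈ V, ∃ u ∈ V, SetRel.comp u u ⊆ v) ∧
      ⋂₀ V = (SetRel.id : SetRel G G) := by
  subst hV
  have hrefl : ∀ v ∈ {v | ∃ M : Set (G × G), M ⊆ cayley F ∧
      (∃ C : Set (G × G), IsCompact C ∧ M ⊆ C) ∧ vSet (cayley F) M ⊆ v}, (SetRel.id : SetRel G G) ⊆ v := by
    rintro v ⟨M, _, _, hsub⟩ ⟨a, b⟩ hab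
    rw [SetRel.mem_id] at hab
    subst hab
    exact hsub (vSet_refl _ _ a)
  refine ⟨⟨∅, empty_subset _, ⟨∅, isCompact_empty, subset_rfl⟩, subset_univ _⟩,
    ?_, ?_, hrefl, ?_, ?_, ?_⟩
  · rintro v ⟨M, hMΓ, hMb, hsub⟩ w hvw
    exact ⟨M, hMΓ, hMb, hsub.trans hvw⟩
  · rintro v ⟨M, hMΓ, ⟨C, hC, hMC⟩, hsub⟩ w ⟨M', hM'Γ, ⟨C', hC', hM'C'⟩, hsub'⟩
    refine ⟨M ∪ M', union_subset hMΓ hM'Γ, ⟨C ∪ C', hC.union hC',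
      union_subset_union hMC hM'C'⟩, subset_inter ?_ ?_⟩
    · exact (vSet_anti _ subset_union_left).trans hsub
    · exact (vSet_anti _ subset_union_right).trans hsub'
  · rintro v ⟨M, hMΓ, ⟨C, hC, hMC⟩, hsub⟩
    refine ⟨Prod.swap '' M, ?_, ⟨Prod.swap '' C, hC.image continuous_swap,
      image_mono hMC⟩, ?_⟩
    · rintro p ⟨q, hq, rfl⟩
      exact cayley_symm hFsymm q (hMΓ hq)
    · rintro ⟨a, b⟩ hp
      exact hsub (vSet_symm (cayley_symm hFsymm) hp)
  · rintro v ⟨M, hMΓ, hMb, hsub⟩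
    refine ⟨vSet (cayley F) M, ⟨M, hMΓ, hMb, subset_rfl⟩, ?_⟩
    rintro ⟨a, b⟩ ⟨z, h1, h2⟩
    exact hsub (vSet_trans h1 h2)
  · apply Subset.antisymm
    · rintro ⟨g, h⟩ hgh
      rw [SetRel.mem_id]
      set M : Set (G × G) := {p ∈ cayley F | p.1 = g ∨ p.2 = g} with hM
      have h1F : (1 : G) ∈ F := mem_of_mem_nhds hF1
      have hMmem : vSet (cayley F) M ∈ {v | ∃ M : Set (G × G), M ⊆ cayley F ∧
          (∃ C : Set (G × G), IsCompact C ∧ M ⊆ C) ∧ vSet (cayley F) M ⊆ v} := by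
        refine ⟨M, sep_subset _ _, ⟨((g * ·) '' F) ×ˢ ((g * ·) '' F),
          (hFc.image (continuous_mul_left g)).prod (hFc.image (continuous_mul_left g)), ?_⟩,
          subset_rfl⟩
        rintro ⟨a, b⟩ ⟨⟨f, hf, hb⟩, hor⟩
        dsimp only at hb hor
        rcases hor with ha | hbg
        · exact ⟨⟨1, h1F, by simp [ha]⟩, ⟨f, hf, by simp [hb, ha]⟩⟩
        · refine ⟨⟨f⁻¹, by rw [← hFsymm]; exact Set.inv_mem_inv.mpr hf, ?_⟩,
            ⟨1, h1F, by simp [hbg]⟩⟩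
          dsimp only
          rw [← hbg, hb]; group
      have := hgh _ hMmem
      obtain ⟨n, x, h0, hn, he⟩ := this
      dsimp only at h0 hn
      cases n with
      | zero => rw [← h0]; exact hn
      | succ m =>
        exfalso
        have hedge := he 0 (by omega)
        exact hedge.2 ⟨hedge.1, Or.inl h0⟩
    · intro p hp
      intro v hv
      exact hrefl v hv hp
end
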